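/- arXiv:2404.16836 — 8 statements merged into one kernel-verified Lean document; each statement's English description precedes it below -/
import Mathlib

section
/- For every random matching P and profile c, either P is same-sided with respect to c, or there exists a same-sided random matching Q that strictly lottery dominates P (i.e., d(q_i, c_i) ≤ d(p_i, c_i) for all agents i, with strict inequality for at least one agent). -/
/-!
If `Q` is not same-sided, some object `a` is over-allocated to an agent `i` and under-allocated to
an agent `j`; as row `j` of `Q` and `c j` both sum to one, `j` is over-allocated some other object
`b`. Letting `i` trade a little of `a` for `b` with `j` lowers `j`'s distance by twice the amount
and does not raise `i`'s, so every matching that is not same-sided is strictly dominated.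
Hence a matching minimising the total distance over the compact set of matchings weakly
dominating `P` is same-sided, and it strictly dominates `P` because `P` itself can be improved.
-/

open Finset
open scoped Classical

/-- A lottery over the `n` objects. -/
def IsLottery {n : ℕ} (p : Fin n → ℝ) : Prop :=
  (∀ a, 0 ≤ p a) ∧ ∑ a, p a = 1

/-- A profile of ideal lotteries, one for each of the `n` agents. -/
def IsProfile {n : ℕ} (c : Fin n → Fin n → ℝ) : Prop :=
  ∀ i, IsLottery (c i)

/-- A random matching: a bistochastic matrix. -/
def Bistochastic {n : ℕ} (P : Fin n → Fin n → ℝ) : Prop :=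
  (∀ i a, 0 ≤ P i a) ∧ (∀ i, ∑ a, P i a = 1) ∧ (∀ a, ∑ i, P i a = 1)

/-- Same-sidedness of a matching `P` with respect to profile `c`:
allocations never exceed ideals on excess-demand objects, never fall below
ideals on excess-supply objects, and equal ideals on unanimous objects. -/
def SameSided {n : ℕ} (c P : Fin n → Fin n → ℝ) : Prop :=
  (∀ a, 1 < ∑ i, c i a → ∀ i, P i a ≤ c i a) ∧
  (∀ a, ∑ i, c i a < 1 → ∀ i, c i a ≤ P i a) ∧
  (∀ a, ∑ i, c i a = 1 → ∀ i, P i a = c i a)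

/-- The ℓ¹ distance between two vectors. -/
noncomputable def d1 {n : ℕ} (p q : Fin n → ℝ) : ℝ :=
  ∑ a, |p a - q a|

/-- `Q` strictly lottery dominates `P` with respect to profile `c`. -/
noncomputable def StrictlyDominates {n : ℕ} (c Q P : Fin n → Fin n → ℝ) : Prop :=
  (∀ i, d1 (Q i) (c i) ≤ d1 (P i) (c i)) ∧ ∃ j, d1 (Q j) (c j) < d1 (P j) (c j)

theorem exists_lt_of_lt_of_sum_le {ι M : Type*} [Fintype ι] [AddCommMonoid M] [LinearOrder M]
    [IsOrderedCancelAddMonoid M] {f g : ι → M} {i : ι} (hi : g i < f i)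
    (hs : ∑ k, f k ≤ ∑ k, g k) : ∃ j, f j < g j := by
  by_contra! h
  exact (sum_lt_sum (fun k _ => h k) ⟨i, mem_univ i, hi⟩).not_ge hs

section Trade

variable {ι κ : Type*}

noncomputable def shiftMass (p : κ → ℝ) (a b : κ) (δ : ℝ) (x : κ) : ℝ :=
  p x - (if x = a then δ else 0) + (if x = b then δ else 0)

theorem shiftMass_zero (p : κ → ℝ) (a b : κ) : shiftMass p a b 0 = p := by
  funext x
  simp [shiftMass]

theorem shiftMass_neg (p : κ → ℝ) (a b : κ) (δ : ℝ) :
    shiftMass p a b (-δ) = shiftMass p b a δ := by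
  funext x
  simp only [shiftMass]
  split_ifs <;> ring

theorem shiftMass_apply_left (p : κ → ℝ) {a b : κ} (hab : a ≠ b) (δ : ℝ) :
    shiftMass p a b δ a = p a - δ := by
  simp [shiftMass, hab]

theorem shiftMass_apply_right (p : κ → ℝ) {a b : κ} (hab : a ≠ b) (δ : ℝ) :
    shiftMass p a b δ b = p b + δ := by
  simp [shiftMass, hab.symm]

theorem shiftMass_apply_of_ne (p : κ → ℝ) {a b x : κ} (hxa : x ≠ a) (hxb : x ≠ b) (δ : ℝ) :
    shiftMass p a b δ x = p x := by
  simp [shiftMass, hxa, hxb]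

theorem sum_shiftMass [Fintype κ] (p : κ → ℝ) (a b : κ) (δ : ℝ) :
    ∑ x, shiftMass p a b δ x = ∑ x, p x := by
  simp [shiftMass, sum_add_distrib, sum_sub_distrib]

theorem shiftMass_nonneg {p : κ → ℝ} {a : κ} (b : κ) {δ : ℝ} (hp : ∀ x, 0 ≤ p x) (hδ : 0 ≤ δ)
    (hδa : δ ≤ p a) (x : κ) : 0 ≤ shiftMass p a b δ x := by
  unfold shiftMass
  split_ifs with hxa <;> subst_vars <;> linarith [hp x]

/-- Agent `i` gives `δ` of object `a` to agent `j` in exchange for `δ` of object `b`. -/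
noncomputable def trade (Q : ι → κ → ℝ) (i j : ι) (a b : κ) (δ : ℝ) (k : ι) : κ → ℝ :=
  shiftMass (Q k) a b ((if k = i then δ else 0) - (if k = j then δ else 0))

variable {Q : ι → κ → ℝ} {i j k : ι}

theorem trade_apply_left (hij : i ≠ j) (a b : κ) (δ : ℝ) :
    trade Q i j a b δ i = shiftMass (Q i) a b δ := by
  simp [trade, hij]

theorem trade_apply_right (hij : i ≠ j) (a b : κ) (δ : ℝ) :
    trade Q i j a b δ j = shiftMass (Q j) b a δ := by
  simp [trade, hij.symm, shiftMass_neg]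

theorem trade_apply_of_ne (hki : k ≠ i) (hkj : k ≠ j) (a b : κ) (δ : ℝ) :
    trade Q i j a b δ k = Q k := by
  simp [trade, hki, hkj, shiftMass_zero]

theorem sum_trade_apply [Fintype ι] (i j : ι) (a b : κ) (δ : ℝ) (x : κ) :
    ∑ k, trade Q i j a b δ k x = ∑ k, Q k x := by
  by_cases hxa : x = a <;> by_cases hxb : x = b <;>
    simp [trade, shiftMass, hxa, hxb, sum_add_distrib, sum_sub_distrib]

end Trade

section Matching

variable {n : ℕ}

theorem d1_shiftMass {p q : Fin n → ℝ} {a b : Fin n} (hab : a ≠ b) (δ : ℝ) :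
    d1 (shiftMass p a b δ) q =
      d1 p q + (|p a - δ - q a| - |p a - q a|) + (|p b + δ - q b| - |p b - q b|) := by
  have hdiff : d1 (shiftMass p a b δ) q - d1 p q =
      (|p a - δ - q a| - |p a - q a|) + (|p b + δ - q b| - |p b - q b|) := by
    rw [d1, d1, ← sum_sub_distrib, Fintype.sum_eq_add a b hab fun x hx => by
      rw [shiftMass_apply_of_ne p hx.1 hx.2, sub_self],
      shiftMass_apply_left p hab, shiftMass_apply_right p hab]
  linarith

theorem d1_shiftMass_le {p q : Fin n → ℝ} {a b : Fin n} {δ : ℝ} (hab : a ≠ b) (hδ : 0 ≤ δ)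
    (ha : δ ≤ p a - q a) : d1 (shiftMass p a b δ) q ≤ d1 p q := by
  have hb : |p b + δ - q b| ≤ |p b - q b| + δ := by
    simpa [add_sub_right_comm, abs_of_nonneg hδ] using abs_add_le (p b - q b) δ
  rw [d1_shiftMass hab, abs_of_nonneg (by linarith : 0 ≤ p a - δ - q a),
    abs_of_nonneg (by linarith : 0 ≤ p a - q a)]
  linarith

theorem d1_shiftMass_eq_sub {p q : Fin n → ℝ} {a b : Fin n} {δ : ℝ} (hab : a ≠ b) (hδ : 0 ≤ δ)
    (ha : δ ≤ p a - q a) (hb : δ ≤ q b - p b) :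
    d1 (shiftMass p a b δ) q = d1 p q - 2 * δ := by
  rw [d1_shiftMass hab, abs_of_nonneg (by linarith : 0 ≤ p a - δ - q a),
    abs_of_nonneg (by linarith : 0 ≤ p a - q a), abs_of_nonpos (by linarith : p b + δ - q b ≤ 0),
    abs_of_nonpos (by linarith : p b - q b ≤ 0)]
  ring

theorem Bistochastic.trade {Q : Fin n → Fin n → ℝ} (hQ : Bistochastic Q) {i j a b : Fin n}
    {δ : ℝ} (hij : i ≠ j) (hδ : 0 ≤ δ) (hia : δ ≤ Q i a) (hjb : δ ≤ Q j b) :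
    Bistochastic (trade Q i j a b δ) := by
  refine ⟨fun k x => ?_, fun k => (sum_shiftMass _ _ _ _).trans (hQ.2.1 k),
    fun x => by rw [sum_trade_apply, hQ.2.2 x]⟩
  rcases eq_or_ne k i with rfl | hki
  · exact trade_apply_left hij a b δ ▸ shiftMass_nonneg b (hQ.1 k) hδ hia x
  rcases eq_or_ne k j with rfl | hkj
  · exact trade_apply_right hij a b δ ▸ shiftMass_nonneg a (hQ.1 k) hδ hjb x
  · exact trade_apply_of_ne hki hkj a b δ ▸ hQ.1 k x

theorem exists_over_under_of_not_sameSided {c Q : Fin n → Fin n → ℝ} (hQ : Bistochastic Q)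
    (h : ¬ SameSided c Q) : ∃ a i j, c i a < Q i a ∧ Q j a < c j a := by
  simp only [SameSided, not_and_or, not_forall, not_le, exists_prop] at h
  rcases h with ⟨a, hs, i, hi⟩ | ⟨a, hs, j, hj⟩ | ⟨a, hs, i, hi⟩
  · obtain ⟨j, hj⟩ := exists_lt_of_lt_of_sum_le (f := fun k => Q k a) (g := fun k => c k a) hi
      (by rw [hQ.2.2 a]; exact hs.le)
    exact ⟨a, i, j, hi, hj⟩
  · obtain ⟨i, hi⟩ := exists_lt_of_lt_of_sum_le (f := fun k => c k a) (g := fun k => Q k a) hj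
      (by rw [hQ.2.2 a]; exact hs.le)
    exact ⟨a, i, j, hi, hj⟩
  · rcases lt_or_gt_of_ne hi with hi | hi
    · obtain ⟨j, hj⟩ := exists_lt_of_lt_of_sum_le (f := fun k => c k a) (g := fun k => Q k a) hi
        (by rw [hQ.2.2 a, hs])
      exact ⟨a, j, i, hj, hi⟩
    · obtain ⟨j, hj⟩ := exists_lt_of_lt_of_sum_le (f := fun k => Q k a) (g := fun k => c k a) hi
        (by rw [hQ.2.2 a, hs])
      exact ⟨a, i, j, hi, hj⟩

theorem exists_strictlyDominates_of_not_sameSided {c Q : Fin n → Fin n → ℝ} (hc : IsProfile c)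
    (hQ : Bistochastic Q) (h : ¬ SameSided c Q) :
    ∃ Q', Bistochastic Q' ∧ StrictlyDominates c Q' Q := by
  obtain ⟨a, i, j, hia, hja⟩ := exists_over_under_of_not_sameSided hQ h
  have hij : i ≠ j := by rintro rfl; linarith
  obtain ⟨b, hjb⟩ := exists_lt_of_lt_of_sum_le (f := c j) (g := Q j) hja
    (by rw [hQ.2.1 j, (hc j).2])
  have hab : a ≠ b := by rintro rfl; linarith
  set δ := min (Q i a - c i a) (min (c j a - Q j a) (Q j b - c j b))
  have hδ : 0 < δ := lt_min (by linarith) (lt_min (by linarith) (by linarith))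
  have hδia : δ ≤ Q i a - c i a := min_le_left _ _
  have hδja : δ ≤ c j a - Q j a := (min_le_right _ _).trans (min_le_left _ _)
  have hδjb : δ ≤ Q j b - c j b := (min_le_right _ _).trans (min_le_right _ _)
  have hj : d1 (trade Q i j a b δ j) (c j) = d1 (Q j) (c j) - 2 * δ := by
    rw [trade_apply_right hij, d1_shiftMass_eq_sub hab.symm hδ.le hδjb hδja]
  refine ⟨trade Q i j a b δ, hQ.trade hij hδ.le (by linarith [(hc i).1 a])
    (by linarith [(hc j).1 b]), fun k => ?_, j, by linarith⟩
  rcases eq_or_ne k i with rfl | hki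
  · rw [trade_apply_left hij]
    exact d1_shiftMass_le hab hδ.le hδia
  rcases eq_or_ne k j with rfl | hkj
  · linarith
  · rw [trade_apply_of_ne hki hkj]

theorem isCompact_setOf_bistochastic : IsCompact {Q : Fin n → Fin n → ℝ | Bistochastic Q} := by
  have hclosed : IsClosed {Q : Fin n → Fin n → ℝ | Bistochastic Q} := by
    simp only [Bistochastic, Set.ofPred_and, Set.ofPred_forall]
    refine .inter (isClosed_iInter fun i => isClosed_iInter fun a =>
      isClosed_le continuous_const (by fun_prop)) (.inter (isClosed_iInter fun i =>
      isClosed_eq (by fun_prop) continuous_const) (isClosed_iInter fun a =>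
      isClosed_eq (by fun_prop) continuous_const))
  have hcube : IsCompact
      (Set.univ.pi fun _ : Fin n => Set.univ.pi fun _ : Fin n => Set.Icc (0 : ℝ) 1) :=
    isCompact_univ_pi fun _ => isCompact_univ_pi fun _ => isCompact_Icc
  refine hcube.of_isClosed_subset hclosed fun Q hQ i _ a _ => ⟨hQ.1 i a, ?_⟩
  exact hQ.2.1 i ▸ single_le_sum (fun x _ => hQ.1 i x) (mem_univ a)

noncomputable def totalDistance (c Q : Fin n → Fin n → ℝ) : ℝ :=
  ∑ k, d1 (Q k) (c k)

theorem continuous_totalDistance (c : Fin n → Fin n → ℝ) : Continuous (totalDistance c) := by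
  unfold totalDistance d1
  fun_prop

theorem StrictlyDominates.totalDistance_lt {c Q P : Fin n → Fin n → ℝ}
    (h : StrictlyDominates c Q P) : totalDistance c Q < totalDistance c P :=
  sum_lt_sum (fun k _ => h.1 k) (h.2.imp fun _ hj => ⟨mem_univ _, hj⟩)

theorem isCompact_setOf_bistochastic_weaklyDominates (c P : Fin n → Fin n → ℝ) :
    IsCompact {Q | Bistochastic Q ∧ ∀ k, d1 (Q k) (c k) ≤ d1 (P k) (c k)} := by
  rw [Set.ofPred_and, Set.ofPred_forall]
  exact isCompact_setOf_bistochastic.inter_right <|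
    isClosed_iInter fun k => isClosed_le (by unfold d1; fun_prop) continuous_const

end Matching

/-- Every random matching is either same-sided, or is strictly lottery
dominated by some same-sided random matching. -/
theorem sameSided_or_dominated {n : ℕ}
    (c P : Fin n → Fin n → ℝ) (hc : IsProfile c) (hP : Bistochastic P) :
    SameSided c P ∨
      ∃ Q : Fin n → Fin n → ℝ, Bistochastic Q ∧ SameSided c Q ∧
        StrictlyDominates c Q P := by
  by_cases hP_ss : SameSided c P
  · exact Or.inl hP_ss
  obtain ⟨P', hP', hP'P⟩ := exists_strictlyDominates_of_not_sameSided hc hP hP_ss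
  obtain ⟨Q, ⟨hQ, hQP⟩, hmin⟩ := (isCompact_setOf_bistochastic_weaklyDominates c P).exists_isMinOn
    ⟨P, hP, fun _ => le_rfl⟩ (continuous_totalDistance c).continuousOn
  have hQ_ss : SameSided c Q := by
    by_contra hQ_ss
    obtain ⟨Q', hQ', hQ'Q⟩ := exists_strictlyDominates_of_not_sameSided hc hQ hQ_ss
    exact hQ'Q.totalDistance_lt.not_ge (hmin ⟨hQ', fun k => (hQ'Q.1 k).trans (hQP k)⟩)
  obtain ⟨j, -, hj⟩ := exists_lt_of_sum_lt ((hmin ⟨hP', hP'P.1⟩).trans_lt hP'P.totalDistance_lt)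
  exact Or.inr ⟨Q, hQ, hQ_ss, hQP, j, hj⟩
end

section
/- A random matching P is Pareto efficient with respect to a profile c (i.e., not strictly lottery dominated by any other random matching, where agent i compares allocations by ℓ¹ distance to their ideal lottery c_i) if and only if P is same-sided with respect to c. -/
open Finset
open scoped Classical

/-- Pareto efficiency: `P` is not strictly lottery dominated by any other
random matching. -/
noncomputable def Efficient {n : ℕ} (c P : Fin n → Fin n → ℝ) : Prop :=
  ¬ ∃ Q : Fin n → Fin n → ℝ, Bistochastic Q ∧ StrictlyDominates c Q P

/-- Lower bound on total distance for any bistochastic matrix. -/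
lemma sum_d1_lower {n : ℕ} (c Q : Fin n → Fin n → ℝ) (hQ : Bistochastic Q) :
    ∑ a, |1 - ∑ i, c i a| ≤ ∑ i, d1 (Q i) (c i) := by
  have h : ∑ i, d1 (Q i) (c i) = ∑ a, ∑ i, |Q i a - c i a| := by
    unfold d1; rw [Finset.sum_comm]
  rw [h]
  apply Finset.sum_le_sum
  intro a _
  have h2 : (1 : ℝ) - ∑ i, c i a = ∑ i, (Q i a - c i a) := by
    rw [Finset.sum_sub_distrib, hQ.2.2 a]
  rw [h2]
  exact Finset.abs_sum_le_sum_abs _ _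

/-- A same-sided matching achieves the lower bound. -/
lemma sum_d1_eq {n : ℕ} (c P : Fin n → Fin n → ℝ) (hP : Bistochastic P)
    (hSS : SameSided c P) :
    ∑ i, d1 (P i) (c i) = ∑ a, |1 - ∑ i, c i a| := by
  have h : ∑ i, d1 (P i) (c i) = ∑ a, ∑ i, |P i a - c i a| := by
    unfold d1; rw [Finset.sum_comm]
  rw [h]
  apply Finset.sum_congr rfl
  intro a _
  rcases lt_trichotomy (∑ i, c i a) 1 with hlt | heq | hgt
  · have habs : |1 - ∑ i, c i a| = 1 - ∑ i, c i a := abs_of_pos (by linarith)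
    have hterm : ∀ i ∈ univ, |P i a - c i a| = P i a - c i a := fun i _ =>
      abs_of_nonneg (by have := hSS.2.1 a hlt i; linarith)
    rw [habs, Finset.sum_congr rfl hterm, Finset.sum_sub_distrib, hP.2.2 a]
  · have hterm : ∀ i ∈ univ, |P i a - c i a| = 0 := fun i _ => by
      rw [hSS.2.2 a heq i]; simp
    rw [Finset.sum_congr rfl hterm, heq]
    simp
  · have habs : |1 - ∑ i, c i a| = ∑ i, c i a - 1 := by
      rw [abs_of_neg (by linarith)]; ring
    have hterm : ∀ i ∈ univ, |P i a - c i a| = c i a - P i a := fun i _ => by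
      rw [abs_of_nonpos (by have := hSS.1 a hgt i; linarith)]; ring
    rw [habs, Finset.sum_congr rfl hterm, Finset.sum_sub_distrib, hP.2.2 a]

/-- Given an over-allocated agent `i` and under-allocated agent `j` on object
`a`, a dominating bistochastic matrix exists. -/
lemma exists_dominator {n : ℕ} (c P : Fin n → Fin n → ℝ) (hc : IsProfile c)
    (hP : Bistochastic P) (a i j : Fin n)
    (hi : c i a < P i a) (hj : P j a < c j a) :
    ∃ Q : Fin n → Fin n → ℝ, Bistochastic Q ∧ StrictlyDominates c Q P := by
  have hij : i ≠ j := by rintro rfl; linarith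
  -- find b ≠ a with c j b < P j b
  have hsum : ∑ b ∈ univ.erase a, c j b < ∑ b ∈ univ.erase a, P j b := by
    have h1 : ∑ b ∈ univ.erase a, c j b = 1 - c j a := by
      rw [Finset.sum_erase_eq_sub (mem_univ a), (hc j).2]
    have h2 : ∑ b ∈ univ.erase a, P j b = 1 - P j a := by
      rw [Finset.sum_erase_eq_sub (mem_univ a), hP.2.1 j]
    rw [h1, h2]; linarith
  obtain ⟨b, hb_mem, hb⟩ := Finset.exists_lt_of_sum_lt hsum
  have hba : b ≠ a := (Finset.mem_erase.mp hb_mem).1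
  set ε := min (P i a - c i a) (min (c j a - P j a) (P j b - c j b)) with hεdef
  have hε : 0 < ε := by
    apply lt_min (by linarith)
    exact lt_min (by linarith) (by linarith)
  have hε1 : ε ≤ P i a - c i a := min_le_left _ _
  have hε2 : ε ≤ c j a - P j a := le_trans (min_le_right _ _) (min_le_left _ _)
  have hε3 : ε ≤ P j b - c j b := le_trans (min_le_right _ _) (min_le_right _ _)
  set r : Fin n → ℝ := fun k => (if k = j then 1 else 0) - (if k = i then 1 else 0) with hr
  set s : Fin n → ℝ := fun x => (if x = a then 1 else 0) - (if x = b then 1 else 0) with hs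
  have hri : r i = -1 := by simp [hr, hij]
  have hrj : r j = 1 := by simp [hr, hij.symm]
  have hrk : ∀ k, k ≠ i → k ≠ j → r k = 0 := by intro k h1 h2; simp [hr, h1, h2]
  have hsa : s a = 1 := by simp [hs, hba.symm]
  have hsb : s b = -1 := by simp [hs, hba]
  have hsx : ∀ x, x ≠ a → x ≠ b → s x = 0 := by intro x h1 h2; simp [hs, h1, h2]
  have hrsum : ∑ k, r k = 0 := by simp [hr, Finset.sum_sub_distrib]
  have hssum : ∑ x, s x = 0 := by simp [hs, Finset.sum_sub_distrib]
  refine ⟨fun k x => P k x + ε * (r k * s x), ⟨?_, ?_, ?_⟩, ?_, ?_⟩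
  · -- nonnegativity
    intro k x
    dsimp only
    by_cases hk1 : k = i
    · rw [hk1]
      by_cases hx1 : x = a
      · rw [hx1, hri, hsa]
        have := (hc i).1 a; nlinarith
      · by_cases hx2 : x = b
        · rw [hx2, hri, hsb]
          have := hP.1 i b; nlinarith
        · rw [hri, hsx x hx1 hx2]; have := hP.1 i x; nlinarith
    · by_cases hk2 : k = j
      · rw [hk2]
        by_cases hx1 : x = a
        · rw [hx1, hrj, hsa]; have := hP.1 j a; nlinarith
        · by_cases hx2 : x = b
          · rw [hx2, hrj, hsb]
            have := (hc j).1 b; nlinarith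
          · rw [hrj, hsx x hx1 hx2]; have := hP.1 j x; nlinarith
      · rw [hrk k hk1 hk2]; have := hP.1 k x; nlinarith
  · -- row sums
    intro k
    dsimp only
    rw [Finset.sum_add_distrib, hP.2.1 k]
    have : ∑ x, ε * (r k * s x) = ε * r k * ∑ x, s x := by
      rw [Finset.mul_sum]; apply Finset.sum_congr rfl; intro x _; ring
    rw [this, hssum]; ring
  · -- column sums
    intro x
    dsimp only
    rw [Finset.sum_add_distrib, hP.2.2 x]
    have : ∑ k, ε * (r k * s x) = ε * s x * ∑ k, r k := by
      rw [Finset.mul_sum]; apply Finset.sum_congr rfl; intro k _; ring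
    rw [this, hrsum]; ring
  · -- weak improvement for all
    intro k
    dsimp only
    by_cases hk1 : k = i
    · rw [hk1]
      unfold d1
      have hle : ∀ x ∈ univ, |P i x + ε * (r i * s x) - c i x| ≤ |P i x - c i x| - ε * s x := by
        intro x _
        by_cases hx1 : x = a
        · rw [hx1, hri, hsa]
          rw [abs_of_nonneg (by linarith), abs_of_nonneg (by linarith)]
          linarith
        · by_cases hx2 : x = b
          · rw [hx2, hri, hsb]
            have : P i b + ε * (-1 * -1) - c i b = (P i b - c i b) + ε := by ring
            rw [this]
            calc |(P i b - c i b) + ε| ≤ |P i b - c i b| + |ε| := abs_add_le _ _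
              _ = |P i b - c i b| - ε * (-1) := by rw [abs_of_pos hε]; ring
          · rw [hri, hsx x hx1 hx2]; simp
      calc ∑ x, |P i x + ε * (r i * s x) - c i x|
          ≤ ∑ x, (|P i x - c i x| - ε * s x) := Finset.sum_le_sum hle
        _ = ∑ x, |P i x - c i x| - ε * ∑ x, s x := by
            rw [Finset.sum_sub_distrib, Finset.mul_sum]
        _ = ∑ x, |P i x - c i x| := by rw [hssum]; ring
    · by_cases hk2 : k = j
      · rw [hk2]
        unfold d1
        have hle : ∀ x ∈ univ, |P j x + ε * (r j * s x) - c j x| ≤ |P j x - c j x| := by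
          intro x _
          by_cases hx1 : x = a
          · rw [hx1, hrj, hsa]
            rw [abs_of_nonpos (by linarith), abs_of_nonpos (by linarith)]
            linarith
          · by_cases hx2 : x = b
            · rw [hx2, hrj, hsb]
              rw [abs_of_nonneg (by linarith), abs_of_nonneg (by linarith)]
              linarith
            · rw [hrj, hsx x hx1 hx2]; simp
        exact Finset.sum_le_sum hle
      · unfold d1
        apply le_of_eq
        apply Finset.sum_congr rfl
        intro x _
        rw [hrk k hk1 hk2]; ring_nf
  · -- strict improvement for j
    refine ⟨j, ?_⟩
    dsimp only
    unfold d1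
    have hle : ∀ x ∈ univ, |P j x + ε * (r j * s x) - c j x|
        ≤ |P j x - c j x| - ε * ((if x = a then 1 else 0) + (if x = b then 1 else 0)) := by
      intro x _
      by_cases hx1 : x = a
      · rw [hx1, hrj, hsa, if_pos rfl, if_neg hba.symm]
        rw [abs_of_nonpos (by linarith), abs_of_nonpos (by linarith)]
        linarith
      · by_cases hx2 : x = b
        · rw [hx2, hrj, hsb, if_neg (hx2 ▸ hba), if_pos rfl]
          rw [abs_of_nonneg (by linarith), abs_of_nonneg (by linarith)]
          linarith
        · rw [hrj, hsx x hx1 hx2, if_neg hx1, if_neg hx2]; simp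
    calc ∑ x, |P j x + ε * (r j * s x) - c j x|
        ≤ ∑ x, (|P j x - c j x| - ε * ((if x = a then 1 else 0) + (if x = b then 1 else 0))) :=
          Finset.sum_le_sum hle
      _ = ∑ x, |P j x - c j x| - ε * 2 := by
          have h2 : ∑ x, ((if x = a then (1:ℝ) else 0) + (if x = b then 1 else 0)) = 2 := by
            rw [Finset.sum_add_distrib]
            rw [Finset.sum_ite_eq' univ a (fun _ => (1:ℝ)),
              Finset.sum_ite_eq' univ b (fun _ => (1:ℝ))]
            norm_num
          rw [Finset.sum_sub_distrib, ← Finset.mul_sum, h2]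
      _ < ∑ x, |P j x - c j x| := by linarith

/-- A random matching is Pareto efficient iff it is same-sided. -/
theorem efficient_iff_sameSided {n : ℕ}
    (c P : Fin n → Fin n → ℝ) (hc : IsProfile c) (hP : Bistochastic P) :
    Efficient c P ↔ SameSided c P := by
  constructor
  · intro hEff
    by_contra hSS
    apply hEff
    have hcases : (¬ ∀ a, 1 < ∑ i, c i a → ∀ i, P i a ≤ c i a) ∨
        (¬ ∀ a, ∑ i, c i a < 1 → ∀ i, c i a ≤ P i a) ∨
        (¬ ∀ a, ∑ i, c i a = 1 → ∀ i, P i a = c i a) := by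
      by_contra h
      push_neg at h
      exact hSS ⟨h.1, h.2.1, h.2.2⟩
    obtain ⟨a, i, j, hi, hj⟩ : ∃ a i j, c i a < P i a ∧ P j a < c j a := by
      rcases hcases with h | h | h
      · push_neg at h
        obtain ⟨a, ha, i, hia⟩ := h
        have hlt : ∑ k, P k a < ∑ k, c k a := by rw [hP.2.2 a]; exact ha
        obtain ⟨j, _, hja⟩ := Finset.exists_lt_of_sum_lt hlt
        exact ⟨a, i, j, hia, hja⟩
      · push_neg at h
        obtain ⟨a, ha, i, hia⟩ := h
        have hlt : ∑ k, c k a < ∑ k, P k a := by rw [hP.2.2 a]; exact ha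
        obtain ⟨j, _, hja⟩ := Finset.exists_lt_of_sum_lt hlt
        exact ⟨a, j, i, hja, hia⟩
      · push_neg at h
        obtain ⟨a, ha, i, hia⟩ := h
        rcases lt_or_gt_of_ne hia with hlt | hgt
        · -- P i a < c i a : find j with c j a < P j a
          have hsum : ∑ k ∈ univ.erase i, c k a < ∑ k ∈ univ.erase i, P k a := by
            rw [Finset.sum_erase_eq_sub (mem_univ i), Finset.sum_erase_eq_sub (mem_univ i),
              hP.2.2 a, ha]
            linarith
          obtain ⟨j, _, hja⟩ := Finset.exists_lt_of_sum_lt hsum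
          exact ⟨a, j, i, hja, hlt⟩
        · have hsum : ∑ k ∈ univ.erase i, P k a < ∑ k ∈ univ.erase i, c k a := by
            rw [Finset.sum_erase_eq_sub (mem_univ i), Finset.sum_erase_eq_sub (mem_univ i),
              hP.2.2 a, ha]
            linarith
          obtain ⟨j, _, hja⟩ := Finset.exists_lt_of_sum_lt hsum
          exact ⟨a, i, j, hgt, hja⟩
    exact exists_dominator c P hc hP a i j hi hj
  · rintro hSS ⟨Q, hQ, hdom, j0, hj0⟩
    have hs : ∑ i, d1 (Q i) (c i) < ∑ i, d1 (P i) (c i) :=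
      Finset.sum_lt_sum (fun i _ => hdom i) ⟨j0, mem_univ _, hj0⟩
    have h1 := sum_d1_lower c Q hQ
    have h2 := sum_d1_eq c P hP hSS
    linarith
end

section
/- The uniform rule is strategy-proof in the excess-demand case: if Σ_j x_j ≥ 1 and agent i reports x'_i instead of x_i, and with the misreport the total peaks still satisfy x'_i + Σ_{j≠i} x_j ≥ 1, then |x_i − UR_i(x)| ≤ |x_i − UR_i(x'_i, x_{−i})|. -/
open Finset

/-- Strategy-proofness of the uniform rule in the excess-demand case: if
agent `i` misreports `x'_i` instead of `x_i` and the misreported profile is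
still in excess demand, agent `i`'s share does not get closer to their true
peak. Here `l` and `l'` solve the uniform-rule equations for the true and
misreported profiles respectively. -/
theorem uniformRule_strategyProof_excessDemand {n : ℕ} (x : Fin n → ℝ)
    (hx : ∀ j, x j ∈ Set.Icc (0 : ℝ) 1) (i : Fin n) (x'i : ℝ)
    (hx'i : x'i ∈ Set.Icc (0 : ℝ) 1)
    (hsum : 1 ≤ ∑ j, x j)
    (hsum' : 1 ≤ ∑ j, Function.update x i x'i j)
    (l l' : ℝ) (hl : 0 ≤ l) (hl' : 0 ≤ l')
    (heq : ∑ j, min (x j) l = 1)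
    (heq' : ∑ j, min (Function.update x i x'i j) l' = 1) :
    |x i - min (x i) l| ≤ |x i - min (Function.update x i x'i i) l'| := by
  rw [Function.update_self]
  rcases le_or_gt (x i) l with h | h
  · rw [min_eq_left h, sub_self, abs_zero]
    exact abs_nonneg _
  · -- l < x i
    rw [min_eq_right h.le]
    have hA : min (x i) l + ∑ j ∈ univ.erase i, min (x j) l = 1 := by
      rw [Finset.add_sum_erase _ (fun j => min (x j) l) (mem_univ i)]; exact heq
    have hA' : min x'i l' + ∑ j ∈ univ.erase i, min (x j) l' = 1 := by
      rw [← heq', ← Finset.add_sum_erase _ (fun j => min (Function.update x i x'i j) l')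
        (mem_univ i), Function.update_self]
      congr 1
      exact Finset.sum_congr rfl fun j hj => by
        rw [Function.update_of_ne (Finset.ne_of_mem_erase hj)]
    rw [min_eq_right h.le] at hA
    rcases le_or_gt l l' with hll | hll
    · have hsle : ∑ j ∈ univ.erase i, min (x j) l ≤ ∑ j ∈ univ.erase i, min (x j) l' :=
        Finset.sum_le_sum fun j _ => min_le_min le_rfl hll
      have h1 : min x'i l' ≤ l := by linarith
      rw [abs_of_nonneg (by linarith), abs_of_nonneg (by linarith)]
      linarith
    · have hsle : ∑ j ∈ univ.erase i, min (x j) l' ≤ ∑ j ∈ univ.erase i, min (x j) l :=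
        Finset.sum_le_sum fun j _ => min_le_min le_rfl hll.le
      have h1 : l ≤ min x'i l' := by linarith
      have h2 : min x'i l' ≤ l' := min_le_right _ _
      linarith
end

section
/- In the excess-demand case of the uniform rule, if one agent lowers their peak then every other agent's allocation weakly increases but never exceeds that agent's peak: if Σ_j x_j ≥ 1, x'_i ≤ x_i, and x'_i + Σ_{j≠i} x_j ≥ 1, then for all j ≠ i, UR_j(x) ≤ UR_j(x'_i, x_{−i}) ≤ x_j. -/
open Finset

/-- In the excess-demand case of the uniform rule, if one agent lowers their
peak (keeping the profile in excess demand), then every other agent's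
uniform-rule share weakly increases but never exceeds that agent's peak. -/
theorem uniformRule_lowerPeak_monotone {n : ℕ} (x : Fin n → ℝ)
    (hx : ∀ j, x j ∈ Set.Icc (0 : ℝ) 1) (i : Fin n) (x'i : ℝ)
    (hx'i : x'i ∈ Set.Icc (0 : ℝ) 1) (hle : x'i ≤ x i)
    (hsum : 1 ≤ ∑ j, x j)
    (hsum' : 1 ≤ ∑ j, Function.update x i x'i j)
    (l l' : ℝ) (hl : 0 ≤ l) (hl' : 0 ≤ l')
    (heq : ∑ j, min (x j) l = 1)
    (heq' : ∑ j, min (Function.update x i x'i j) l' = 1) :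
    ∀ j, j ≠ i →
      min (x j) l ≤ min (Function.update x i x'i j) l' ∧
      min (Function.update x i x'i j) l' ≤ x j := by
  intro j hj
  have hupd : Function.update x i x'i j = x j := Function.update_of_ne hj _ _
  rw [hupd]
  refine ⟨?_, min_le_left _ _⟩
  rcases le_total l l' with h | h
  · exact min_le_min le_rfl h
  ·
    have hpt : ∀ k, Function.update x i x'i k ≤ x k := by
      intro k
      rcases eq_or_ne k i with rfl | hk
      · simpa using hle
      · simp [Function.update_of_ne hk]
    have h1 : ∑ k, min (Function.update x i x'i k) l' ≤ ∑ k, min (x k) l' :=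
      Finset.sum_le_sum fun k _ => min_le_min (hpt k) le_rfl
    have h2 : ∀ k ∈ Finset.univ, min (x k) l' ≤ min (x k) l :=
      fun k _ => min_le_min le_rfl h
    have h3 : ∑ k, min (x k) l' ≤ ∑ k, min (x k) l := Finset.sum_le_sum h2
    have hsumeq : ∑ k, min (x k) l' = ∑ k, min (x k) l := by
      rw [heq]; linarith [heq'.symm ▸ h1]
    have := (Finset.sum_eq_sum_iff_of_le h2).mp hsumeq j (Finset.mem_univ j)
    rw [← this]
end

section
/- All URC mechanisms are welfare equivalent: for any two orderings (α, β) and (α', β') of agents and objects, for every profile c and every agent i, d(URC^{α,β}_i(c), c_i) = d(URC^{α',β'}_i(c), c_i). -/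
open Finset
open scoped Classical

/-- `μ` is a URC mechanism (for some fixed orderings of agents and objects):
for every profile, its outcome is a bistochastic matrix; on each
excess-demand object the column of ideals is divided by the uniform rule
(phase 1); and on every other object each agent receives at least their
ideal (phase 1 gives the ideal, phase 2 only adds amounts). -/
noncomputable def IsURC {n : ℕ} (μ : (Fin n → Fin n → ℝ) → (Fin n → Fin n → ℝ)) : Prop :=
  ∀ c, IsProfile c →
    Bistochastic (μ c) ∧
    (∀ a, 1 < ∑ i, c i a →
      ∃ l : ℝ, 0 ≤ l ∧ (∑ i, min (c i a) l = 1) ∧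
        ∀ i, μ c i a = min (c i a) l) ∧
    (∀ a, ∑ i, c i a ≤ 1 → ∀ i, c i a ≤ μ c i a)

lemma min_sum_unique {n : ℕ} (f : Fin n → ℝ) {l l' : ℝ} (hll' : l ≤ l')
    (hsum : ∑ i, min (f i) l = ∑ i, min (f i) l') (i : Fin n) :
    min (f i) l = min (f i) l' := by
  have hle : ∀ j ∈ Finset.univ, min (f j) l ≤ min (f j) l' :=
    fun j _ => min_le_min le_rfl hll'
  exact (Finset.sum_eq_sum_iff_of_le hle).mp hsum i (Finset.mem_univ i)

lemma min_sum_unique' {n : ℕ} (f : Fin n → ℝ) {l l' : ℝ}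
    (hsum : ∑ i, min (f i) l = ∑ i, min (f i) l') (i : Fin n) :
    min (f i) l = min (f i) l' := by
  rcases le_total l l' with h | h
  · exact min_sum_unique f h hsum i
  · exact (min_sum_unique f h hsum.symm i).symm

lemma URC_d1 {n : ℕ} (μ : (Fin n → Fin n → ℝ) → (Fin n → Fin n → ℝ))
    (hμ : IsURC μ) (c : Fin n → Fin n → ℝ) (hc : IsProfile c) (i : Fin n) :
    d1 (μ c i) (c i) =
      2 * ∑ a ∈ Finset.univ.filter (fun a => 1 < ∑ j, c j a), (c i a - μ c i a) := by
  obtain ⟨hbi, hED, hES⟩ := hμ c hc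
  set ED := Finset.univ.filter (fun a => 1 < ∑ j, c j a) with hEDdef
  have habs : ∀ a, |μ c i a - c i a| =
      if a ∈ ED then c i a - μ c i a else μ c i a - c i a := by
    intro a
    by_cases ha : a ∈ ED
    · simp only [ha, if_true]
      obtain ⟨l, _, _, hl⟩ := hED a (by simpa [hEDdef] using ha)
      have : μ c i a ≤ c i a := by rw [hl i]; exact min_le_left _ _
      rw [abs_sub_comm]; exact abs_of_nonneg (by linarith)
    · simp only [ha, if_false]
      have ha' : ∑ j, c j a ≤ 1 := le_of_not_gt (by simpa [hEDdef] using ha)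
      exact abs_of_nonneg (by linarith [hES a ha' i])
  have hsum0 : ∑ a, (μ c i a - c i a) = 0 := by
    rw [Finset.sum_sub_distrib, hbi.2.1 i, (hc i).2]; ring
  have hsplit : ∑ a ∈ ED, (μ c i a - c i a) + ∑ a ∈ EDᶜ, (μ c i a - c i a) = 0 := by
    rw [Finset.sum_add_sum_compl]; exact hsum0
  have : d1 (μ c i) (c i)
      = ∑ a ∈ ED, (c i a - μ c i a) + ∑ a ∈ EDᶜ, (μ c i a - c i a) := by
    unfold d1
    rw [← Finset.sum_add_sum_compl ED]
    congr 1
    · exact Finset.sum_congr rfl fun a ha => by rw [habs a, if_pos ha]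
    · exact Finset.sum_congr rfl fun a ha => by
        rw [habs a, if_neg (Finset.mem_compl.mp ha)]
  rw [this]
  have h2 : ∑ a ∈ EDᶜ, (μ c i a - c i a) = ∑ a ∈ ED, (c i a - μ c i a) := by
    have := hsplit
    have h3 : ∑ a ∈ ED, (μ c i a - c i a) = - ∑ a ∈ ED, (c i a - μ c i a) := by
      rw [← Finset.sum_neg_distrib]; exact Finset.sum_congr rfl fun a _ => by ring
    linarith [hsplit, h3.symm ▸ hsplit]
  rw [h2]; ring

/-- All URC mechanisms (i.e., for all orderings of agents and objects) are
welfare equivalent: each agent's allocation is at the same ℓ¹ distance from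
their ideal lottery. -/
theorem URC_welfare_equivalent {n : ℕ}
    (μ μ' : (Fin n → Fin n → ℝ) → (Fin n → Fin n → ℝ))
    (hμ : IsURC μ) (hμ' : IsURC μ')
    (c : Fin n → Fin n → ℝ) (hc : IsProfile c) (i : Fin n) :
    d1 (μ c i) (c i) = d1 (μ' c i) (c i) := by
  have key : ∀ a, 1 < ∑ j, c j a → μ c i a = μ' c i a := by
    intro a ha
    obtain ⟨l, _, hl1, hl⟩ := (hμ c hc).2.1 a ha
    obtain ⟨l', _, hl1', hl'⟩ := (hμ' c hc).2.1 a ha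
    rw [hl i, hl' i]
    exact min_sum_unique' (fun j => c j a) (by rw [hl1, hl1']) i
  rw [URC_d1 μ hμ c hc i, URC_d1 μ' hμ' c hc i]
  congr 1
  refine Finset.sum_congr rfl fun a ha => ?_
  rw [key a (by simpa using ha)]
end

section
/- URC mechanisms are strategy-proof: for every profile c, every agent i, and every alternative report c'_i, d(c_i, URC_i(c)) ≤ d(c_i, URC_i(c'_i, c_{−i})). -/
open Finset
open scoped Classical

lemma abs_eq_two_max (x : ℝ) : |x| = 2 * max x 0 - x := by
  rcases le_total x 0 with h | h
  · rw [abs_of_nonpos h, max_eq_right h]; ring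
  · rw [abs_of_nonneg h, max_eq_left h]; ring

lemma d1_eq {n : ℕ} (p q : Fin n → ℝ) (hp : ∑ a, p a = ∑ a, q a) :
    d1 p q = 2 * ∑ a, max (p a - q a) 0 := by
  have hz : ∑ a, (p a - q a) = 0 := by rw [Finset.sum_sub_distrib, hp, sub_self]
  calc ∑ a, |p a - q a|
      = ∑ a, (2 * max (p a - q a) 0 - (p a - q a)) := by
        exact Finset.sum_congr rfl fun a _ => abs_eq_two_max _
    _ = 2 * ∑ a, max (p a - q a) 0 - ∑ a, (p a - q a) := by
        rw [Finset.sum_sub_distrib, Finset.mul_sum]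
    _ = _ := by rw [hz, sub_zero]

/-- URC mechanisms are strategy-proof: no agent can bring their allocation
closer to their true ideal lottery by misreporting. -/
theorem URC_strategyProof {n : ℕ}
    (μ : (Fin n → Fin n → ℝ) → (Fin n → Fin n → ℝ)) (hμ : IsURC μ)
    (c : Fin n → Fin n → ℝ) (hc : IsProfile c) (i : Fin n)
    (c'i : Fin n → ℝ) (hc'i : IsLottery c'i) :
    d1 (c i) (μ c i) ≤ d1 (c i) (μ (Function.update c i c'i) i) := by
  classical
  set c' := Function.update c i c'i with hc'def
  have hc' : IsProfile c' := by
    intro j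
    by_cases h : j = i
    · subst h; simpa [c'] using hc'i
    · simpa [c', Function.update_of_ne h] using hc j
  obtain ⟨hB, hE, hS⟩ := hμ c hc
  obtain ⟨hB', hE', hS'⟩ := hμ c' hc'
  have hci : ∑ a, c i a = 1 := (hc i).2
  rw [d1_eq _ _ (by rw [hci, hB.2.1 i]), d1_eq _ _ (by rw [hci, hB'.2.1 i])]
  have key : ∀ a, max (c i a - μ c i a) 0 ≤ max (c i a - μ c' i a) 0 := by
    intro a
    by_cases hA : 1 < ∑ j, c j a
    · obtain ⟨l, hl0, hlsum, hlall⟩ := hE a hA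
      have e1 : min (c i a) l + ∑ j ∈ univ.erase i, min (c j a) l = 1 := by
        rw [← hlsum]
        exact Finset.add_sum_erase _ (fun j => min (c j a) l) (mem_univ i)
      by_cases hA' : 1 < ∑ j, c' j a
      · obtain ⟨l', hl'0, hl'sum, hl'all⟩ := hE' a hA'
        rw [hlall i, hl'all i]
        by_cases hcl : c i a ≤ l
        · rw [min_eq_left hcl]
          simpa using le_max_right (c i a - min (c' i a) l') 0
        · push_neg at hcl
          have hle : min (c' i a) l' ≤ l := by
            by_contra hcon
            push_neg at hcon
            have hll' : l ≤ l' := le_trans hcon.le (min_le_right _ _)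
            have h1 : ∑ j ∈ univ.erase i, min (c j a) l ≤
                ∑ j ∈ univ.erase i, min (c' j a) l' := by
              apply Finset.sum_le_sum
              intro j hj
              have hji : j ≠ i := Finset.ne_of_mem_erase hj
              have : c' j a = c j a := by rw [hc'def, Function.update_of_ne hji]
              rw [this]
              exact min_le_min le_rfl hll'
            have e2 : min (c' i a) l' + ∑ j ∈ univ.erase i, min (c' j a) l' = 1 := by
              rw [← hl'sum]
              exact Finset.add_sum_erase _ (fun j => min (c' j a) l') (mem_univ i)
            have hmi : min (c i a) l = l := min_eq_right hcl.le
            linarith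
          have h2 : c i a - min (c i a) l ≤ c i a - min (c' i a) l' := by
            rw [min_eq_right hcl.le]; linarith
          exact max_le (le_trans h2 (le_max_left _ _)) (le_max_right _ _)
      · -- column a not excess under c'
        have hle1 : ∑ j, c' j a ≤ 1 := le_of_not_gt hA'
        have hs1 : ∑ j ∈ univ.erase i, c j a ≤ ∑ j ∈ univ.erase i, μ c' j a := by
          apply Finset.sum_le_sum
          intro j hj
          have hji : j ≠ i := Finset.ne_of_mem_erase hj
          have := hS' a hle1 j
          rwa [hc'def, Function.update_of_ne hji] at this
        have hs2 : ∑ j ∈ univ.erase i, min (c j a) l ≤ ∑ j ∈ univ.erase i, c j a :=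
          Finset.sum_le_sum (fun j _ => min_le_left _ _)
        have e2 : μ c' i a + ∑ j ∈ univ.erase i, μ c' j a = 1 := by
          rw [← hB'.2.2 a]
          exact Finset.add_sum_erase _ (fun j => μ c' j a) (mem_univ i)
        have hkey : μ c' i a ≤ min (c i a) l := by linarith
        rw [hlall i]
        exact max_le_max (by linarith) le_rfl
    · -- a not excess under c
      have := hS a (le_of_not_gt hA) i
      rw [max_eq_right (by linarith : c i a - μ c i a ≤ 0)]
      exact le_max_right _ _
  have hsum : ∑ a, max (c i a - μ c i a) 0 ≤ ∑ a, max (c i a - μ c' i a) 0 :=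
    Finset.sum_le_sum (fun a _ => key a)
  linarith
end

section
/- URC mechanisms are replacement monotonic: let c be a profile, i an agent, and c'_i a lottery with ED(c'_i, c_{−i}) = ED(c) and c'_{ia} ≤ c_{ia} for all a ∈ ED(c). If d(c_i, URC_i(c)) ≤ d(c_i, URC_i(c'_i, c_{−i})), then for every j ≠ i, d(c_j, URC_j(c'_i, c_{−i})) ≤ d(c_j, URC_j(c)). -/
open Finset
open scoped Classical

lemma key_min {n : ℕ} (u v : Fin n → ℝ) (hvu : ∀ k, v k ≤ u k) (l l' : ℝ)
    (hl : ∑ k, min (u k) l = 1) (hl' : ∑ k, min (v k) l' = 1)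
    (k : Fin n) (hk : v k = u k) : min (u k) l ≤ min (v k) l' := by
  rw [hk]
  rcases le_or_gt l l' with h | h
  · exact min_le_min le_rfl h
  · have h1 : ∀ m, min (v m) l' ≤ min (u m) l' := fun m => min_le_min (hvu m) le_rfl
    have h2 : ∀ m, min (u m) l' ≤ min (u m) l := fun m => min_le_min le_rfl h.le
    have hsum : ∑ m, min (u m) l' = 1 := le_antisymm
      (hl ▸ Finset.sum_le_sum fun m _ => h2 m)
      (hl' ▸ Finset.sum_le_sum fun m _ => h1 m)
    have hzero : ∑ m, (min (u m) l - min (u m) l') = 0 := by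
      rw [Finset.sum_sub_distrib, hl, hsum]; ring
    have := (Finset.sum_eq_zero_iff_of_nonneg
      (fun m _ => sub_nonneg.mpr (h2 m))).mp hzero k (Finset.mem_univ k)
    linarith [sub_eq_zero.mp this]

lemma dist_eq {n : ℕ} (cj Pj : Fin n → ℝ) (h1 : ∑ a, cj a = 1) (h2 : ∑ a, Pj a = 1)
    (S : Finset (Fin n)) (hle : ∀ a ∈ S, Pj a ≤ cj a) (hge : ∀ a ∉ S, cj a ≤ Pj a) :
    d1 cj Pj = 2 * ∑ a ∈ S, (cj a - Pj a) := by
  have hsplit : d1 cj Pj = ∑ a ∈ S, |cj a - Pj a| + ∑ a ∈ Sᶜ, |cj a - Pj a| :=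
    (Finset.sum_add_sum_compl S _).symm
  have hA : ∑ a ∈ S, |cj a - Pj a| = ∑ a ∈ S, (cj a - Pj a) :=
    Finset.sum_congr rfl fun a ha => abs_of_nonneg (sub_nonneg.mpr (hle a ha))
  have hB : ∑ a ∈ Sᶜ, |cj a - Pj a| = ∑ a ∈ Sᶜ, (Pj a - cj a) :=
    Finset.sum_congr rfl fun a ha => by
      rw [abs_sub_comm]; exact abs_of_nonneg (sub_nonneg.mpr (hge a (Finset.mem_compl.mp ha)))
  have hc1 : ∑ a ∈ S, cj a + ∑ a ∈ Sᶜ, cj a = 1 := by rw [Finset.sum_add_sum_compl]; exact h1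
  have hc2 : ∑ a ∈ S, Pj a + ∑ a ∈ Sᶜ, Pj a = 1 := by rw [Finset.sum_add_sum_compl]; exact h2
  rw [hsplit, hA, hB, Finset.sum_sub_distrib, Finset.sum_sub_distrib]
  linarith

/-- URC mechanisms are replacement monotonic: if agent `i` changes their
ideal lottery to `c'_i`, keeping the set of excess-demand objects unchanged
and weakly lowering their ideals on all excess-demand objects, and agent
`i`'s own welfare does not improve, then no other agent's welfare
decreases. -/
theorem URC_replacementMonotonic {n : ℕ}
    (μ : (Fin n → Fin n → ℝ) → (Fin n → Fin n → ℝ)) (hμ : IsURC μ)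
    (c : Fin n → Fin n → ℝ) (hc : IsProfile c) (i : Fin n)
    (c'i : Fin n → ℝ) (hc'i : IsLottery c'i)
    (hED : ∀ a : Fin n,
      (1 < ∑ j, Function.update c i c'i j a) ↔ (1 < ∑ j, c j a))
    (hlow : ∀ a, 1 < ∑ j, c j a → c'i a ≤ c i a)
    (hwelf : d1 (c i) (μ c i) ≤ d1 (c i) (μ (Function.update c i c'i) i)) :
    ∀ j, j ≠ i →
      d1 (c j) (μ (Function.update c i c'i) j) ≤ d1 (c j) (μ c j) := by
  intro j hj
  set c' := Function.update c i c'i with hc'def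
  have hc' : IsProfile c' := by
    intro k
    rcases eq_or_ne k i with rfl | hk
    · simpa [hc'def] using hc'i
    · simpa [hc'def, Function.update_of_ne hk] using hc k
  obtain ⟨hB, hEDspec, hfree⟩ := hμ c hc
  obtain ⟨hB', hEDspec', hfree'⟩ := hμ c' hc'
  have hcj' : c' j = c j := Function.update_of_ne hj _ _
  set S : Finset (Fin n) := Finset.univ.filter (fun a => 1 < ∑ k, c k a) with hS
  have hmemS : ∀ a : Fin n, a ∈ S ↔ 1 < ∑ k, c k a := by intro a; simp [hS]
  have hd1 : d1 (c j) (μ c j) = 2 * ∑ a ∈ S, (c j a - μ c j a) := by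
    refine dist_eq _ _ (hc j).2 (hB.2.1 j) S ?_ ?_
    · intro a ha
      obtain ⟨l, _, hsum, hval⟩ := hEDspec a ((hmemS a).mp ha)
      rw [hval j]; exact min_le_left _ _
    · intro a ha
      exact hfree a (not_lt.mp (fun h => ha ((hmemS a).mpr h))) j
  have hd2 : d1 (c j) (μ c' j) = 2 * ∑ a ∈ S, (c j a - μ c' j a) := by
    refine dist_eq _ _ (hc j).2 (hB'.2.1 j) S ?_ ?_
    · intro a ha
      obtain ⟨l, _, hsum, hval⟩ := hEDspec' a ((hED a).mpr ((hmemS a).mp ha))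
      rw [hval j]
      calc min (c' j a) l ≤ c' j a := min_le_left _ _
        _ = c j a := by rw [hcj']
    · intro a ha
      have h1 : ∑ k, c' k a ≤ 1 :=
        not_lt.mp (fun h => ha ((hmemS a).mpr ((hED a).mp h)))
      have := hfree' a h1 j
      rwa [hcj'] at this
  rw [hd1, hd2]
  have hterm : ∀ a ∈ S, μ c j a ≤ μ c' j a := by
    intro a ha
    have hED1 : 1 < ∑ k, c k a := (hmemS a).mp ha
    obtain ⟨l, _, hsum, hval⟩ := hEDspec a hED1
    obtain ⟨l', _, hsum', hval'⟩ := hEDspec' a ((hED a).mpr hED1)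
    rw [hval j, hval' j]
    refine key_min (fun k => c k a) (fun k => c' k a) ?_ l l' hsum hsum' j ?_
    · intro k
      rcases eq_or_ne k i with rfl | hk
      · simpa [hc'def] using hlow a hED1
      · simp [hc'def, Function.update_of_ne hk]
    · show c' j a = c j a; rw [hcj']
  have : ∑ a ∈ S, (c j a - μ c' j a) ≤ ∑ a ∈ S, (c j a - μ c j a) :=
    Finset.sum_le_sum fun a ha => by linarith [hterm a ha]
  linarith
end

section
/- Let μ be a strategy-proof, efficient (same-sided), and in-between mechanism. Let c be a profile and suppose agent i changes c_i to a lottery c'_i that is between c_i and μ_i(c) (componentwise between them). Then μ_{ia}(c'_i, c_{−i}) = μ_{ia}(c) for all objects a. -/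
open Finset
open scoped Classical

/-- `l` is componentwise between `l₁` and `l₂`. -/
def Between {n : ℕ} (l₁ l l₂ : Fin n → ℝ) : Prop :=
  ∀ a, (l₁ a ≤ l a ∧ l a ≤ l₂ a) ∨ (l₂ a ≤ l a ∧ l a ≤ l₁ a)

/-- Strategy-proofness of a mechanism. -/
noncomputable def StrategyProof {n : ℕ}
    (μ : (Fin n → Fin n → ℝ) → (Fin n → Fin n → ℝ)) : Prop :=
  ∀ c, IsProfile c → ∀ i (c'i : Fin n → ℝ), IsLottery c'i →
    d1 (c i) (μ c i) ≤ d1 (c i) (μ (Function.update c i c'i) i)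

/-- Efficiency of a mechanism, in the equivalent form of same-sidedness. -/
def EfficientMech {n : ℕ}
    (μ : (Fin n → Fin n → ℝ) → (Fin n → Fin n → ℝ)) : Prop :=
  ∀ c, IsProfile c → Bistochastic (μ c) ∧ SameSided c (μ c)

/-- In-betweenness of a mechanism. -/
def InBetween {n : ℕ}
    (μ : (Fin n → Fin n → ℝ) → (Fin n → Fin n → ℝ)) : Prop :=
  ∀ c, IsProfile c → ∀ i (c'i : Fin n → ℝ), IsLottery c'i →
    Between (c i) c'i (μ c i) →
    ∀ a, (c'i a ≤ c i a → μ (Function.update c i c'i) i a ≤ μ c i a) ∧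
         (c i a ≤ c'i a → μ c i a ≤ μ (Function.update c i c'i) i a)

/-- For a strategy-proof, efficient (same-sided), in-between mechanism, if an
agent moves their ideal lottery to any lottery between the original ideal
and their allocation, their allocation does not change at all. -/
theorem between_report_fixes_allocation {n : ℕ}
    (μ : (Fin n → Fin n → ℝ) → (Fin n → Fin n → ℝ))
    (hSP : StrategyProof μ) (hEff : EfficientMech μ) (hIB : InBetween μ)
    (c : Fin n → Fin n → ℝ) (hc : IsProfile c) (i : Fin n)
    (c'i : Fin n → ℝ) (hc'i : IsLottery c'i)
    (hbet : Between (c i) c'i (μ c i)) :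
    ∀ a, μ (Function.update c i c'i) i a = μ c i a := by
  set C' := Function.update c i c'i with hC'
  have hprofC' : IsProfile C' := by
    intro j
    by_cases h : j = i
    · subst h; simpa [hC'] using hc'i
    · simpa [hC', Function.update_of_ne h] using hc j
  -- In-betweenness consequences
  have hIBc := hIB c hc i c'i hc'i hbet
  -- pointwise: |c'i a - μ c i a| ≤ |c'i a - μ C' i a|
  have hpt : ∀ a, |c'i a - μ c i a| ≤ |c'i a - μ C' i a| := by
    intro a
    rcases hbet a with ⟨h1, h2⟩ | ⟨h1, h2⟩
    · have h3 : μ c i a ≤ μ C' i a := (hIBc a).2 h1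
      rw [abs_of_nonpos (by linarith), abs_of_nonpos (by linarith)]
      linarith
    · have h3 : μ C' i a ≤ μ c i a := (hIBc a).1 h2
      rw [abs_of_nonneg (by linarith), abs_of_nonneg (by linarith)]
      linarith
  -- strategy-proofness at C' with deviation to c i
  have hupd : Function.update C' i (c i) = c := by
    rw [hC', Function.update_idem, Function.update_eq_self]
  have hSP' := hSP C' hprofC' i (c i) (hc i)
  rw [hupd] at hSP'
  have hCi : C' i = c'i := by simp [hC']
  rw [hCi] at hSP'
  -- so the sums are equal, hence each term is equal
  have hsum : ∑ a, |c'i a - μ c i a| = ∑ a, |c'i a - μ C' i a| := by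
    have h1 : ∑ a, |c'i a - μ c i a| ≤ ∑ a, |c'i a - μ C' i a| :=
      Finset.sum_le_sum fun a _ => hpt a
    have h2 : ∑ a, |c'i a - μ C' i a| ≤ ∑ a, |c'i a - μ c i a| := hSP'
    linarith
  have heq : ∀ a ∈ Finset.univ, |c'i a - μ c i a| = |c'i a - μ C' i a| :=
    (Finset.sum_eq_sum_iff_of_le fun a _ => hpt a).1 hsum
  intro a
  have ha := heq a (Finset.mem_univ a)
  rcases hbet a with ⟨h1, h2⟩ | ⟨h1, h2⟩
  · have h3 : μ c i a ≤ μ C' i a := (hIBc a).2 h1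
    rw [abs_of_nonpos (by linarith : c'i a - μ c i a ≤ 0), abs_of_nonpos (by linarith)] at ha
    linarith
  · have h3 : μ C' i a ≤ μ c i a := (hIBc a).1 h2
    rw [abs_of_nonneg (by linarith : 0 ≤ c'i a - μ c i a), abs_of_nonneg (by linarith)] at ha
    linarith
end
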